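/- There exists a continuous strictly increasing function F : ℝ → (0,1) and a constant d > 0 such that the system c = F(d(1-s)), s = F(d(1-c)) has at least three distinct solutions (c,s) ∈ [0,1]². -/

import Mathlib

open Real

noncomputable def cauchyCDF (x : ℝ) : ℝ := 1 / 2 + arctan x / π

lemma continuous_cauchyCDF : Continuous cauchyCDF := by
  unfold cauchyCDF
  fun_prop

lemma strictMono_cauchyCDF : StrictMono cauchyCDF := fun _ _ h => by
  have := arctan_strictMono h
  unfold cauchyCDF
  gcongr

lemma cauchyCDF_mem_Ioo (x : ℝ) : cauchyCDF x ∈ Set.Ioo 0 1 := by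
  have hlow : -(1 / 2) < arctan x / π := by
    rw [lt_div_iff₀ pi_pos]
    linarith [neg_pi_div_two_lt_arctan x]
  have hupp : arctan x / π < 1 / 2 := by
    rw [div_lt_iff₀ pi_pos]
    linarith [arctan_lt_pi_div_two x]
  constructor <;> unfold cauchyCDF <;> linarith

lemma cauchyCDF_zero : cauchyCDF 0 = 1 / 2 := by
  simp [cauchyCDF]

lemma cauchyCDF_one : cauchyCDF 1 = 3 / 4 := by
  rw [cauchyCDF, arctan_one]
  field_simp
  norm_num

lemma cauchyCDF_neg_one : cauchyCDF (-1) = 1 / 4 := by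
  rw [cauchyCDF, arctan_neg, arctan_one]
  field_simp
  norm_num

/-- There exist a continuous strictly increasing `F : ℝ → (0,1)` and `d > 0` such that
the system `c = F(d(1-s))`, `s = F(d(1-c))` has at least three distinct solutions
`(c,s) ∈ [0,1]²`. -/
theorem stmt12 :
    ∃ (F : ℝ → ℝ) (d : ℝ),
      Continuous F ∧ StrictMono F ∧ (∀ x : ℝ, F x ∈ Set.Ioo (0:ℝ) 1) ∧ 0 < d ∧
      ∃ p₁ p₂ p₃ : ℝ × ℝ,
        p₁ ≠ p₂ ∧ p₁ ≠ p₃ ∧ p₂ ≠ p₃ ∧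
        (∀ p ∈ ({p₁, p₂, p₃} : Set (ℝ × ℝ)),
          p.1 ∈ Set.Icc (0:ℝ) 1 ∧ p.2 ∈ Set.Icc (0:ℝ) 1 ∧
          p.1 = F (d * (1 - p.2)) ∧ p.2 = F (d * (1 - p.1))) := by
  -- `F` fixes `1/4`, `1/2`, `3/4`; with `d = 1`, any `a` with `F a = a` and
  -- `F (1 - a) = 1 - a` gives the solution `(a, 1 - a)`.
  let F : ℝ → ℝ := fun x => cauchyCDF (4 * x - 2)
  have hmono : StrictMono fun x : ℝ => 4 * x - 2 := fun _ _ h => by dsimp only; linarith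
  refine ⟨F, 1, continuous_cauchyCDF.comp (by fun_prop), strictMono_cauchyCDF.comp hmono,
    fun x => cauchyCDF_mem_Ioo _, one_pos, (1 / 4, 3 / 4), (1 / 2, 1 / 2), (3 / 4, 1 / 4),
    by norm_num, by norm_num, by norm_num, ?_⟩
  rintro p (rfl | rfl | rfl) <;>
    norm_num [F, cauchyCDF_zero, cauchyCDF_one, cauchyCDF_neg_one]
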